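/- Let w ∈ S_n be a minimal crowded permutation, i.e., a minimal element of the set of crowded fully commutative permutations under the right weak order. Then: (a) d is a descent of w if and only if, during the RSK insertion of w, the value w(d+1) bumps w(d) to the second row; (b) every entry of Row₂(P(w)) equals w(d) for some descent d of w, and is bumped to the second row by w(d+1). -/

import Mathlib

/-- The value in position `j` (0-indexed) of the one-line notation of `w`,
extended by the identity outside the range `[0, n)`. -/
def entry {n : ℕ} (w : Equiv.Perm (Fin n)) (j : ℕ) : ℕ :=
  if h : j < n then (w ⟨j, h⟩ : ℕ) else j

/-- One-line notation of a permutation, as a list of natural numbers (0-indexed values). -/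
def oneLine {n : ℕ} (w : Equiv.Perm (Fin n)) : List ℕ :=
  List.ofFn (fun i => (w i : ℕ))

/-- A permutation is fully commutative iff it avoids the pattern 321. -/
def FullyCommutative {n : ℕ} (w : Equiv.Perm (Fin n)) : Prop :=
  ¬ ∃ i j k : Fin n, i < j ∧ j < k ∧ w k < w j ∧ w j < w i

/-- A permutation is boolean iff it avoids the patterns 321 and 3412. -/
def BooleanPerm {n : ℕ} (w : Equiv.Perm (Fin n)) : Prop :=
  FullyCommutative w ∧
    ¬ ∃ i j k l : Fin n, i < j ∧ j < k ∧ k < l ∧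
        w k < w l ∧ w l < w i ∧ w i < w j

/-- The Coxeter length of a permutation: its number of inversions. -/
def invCount {n : ℕ} (w : Equiv.Perm (Fin n)) : ℕ :=
  (Finset.univ.filter fun p : Fin n × Fin n => p.1 < p.2 ∧ w p.2 < w p.1).card

/-- The support of `w`: the set of (0-indexed) indices `i` such that the simple
transposition `s_i` appears in some (equivalently, every) reduced word of `w`;
equivalently, `{w(0),…,w(i)} ≠ {0,…,i}`, i.e. `max {w(j) : j ≤ i} > i`. -/
def Supp {n : ℕ} (w : Equiv.Perm (Fin n)) : Set ℕ :=
  {i | ∃ j : Fin n, (j : ℕ) ≤ i ∧ i < (w j : ℕ)}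

/-- The simple transposition `s_i`, swapping positions `i` and `i+1` (0-indexed). -/
def simpleTr {n : ℕ} (i : ℕ) (h : i + 1 < n) : Equiv.Perm (Fin n) :=
  Equiv.swap ⟨i, by omega⟩ ⟨i + 1, h⟩

/-- Schensted row insertion of a value into a tableau (a list of rows). -/
def rowInsert : List (List ℕ) → ℕ → List (List ℕ)
  | [], x => [[x]]
  | r :: rest, x =>
    match r.find? (fun y => decide (x < y)) with
    | none => (r ++ [x]) :: rest
    | some y => (r.map fun z => if z = y then x else z) :: rowInsert rest y

/-- RSK insertion tableau of a list. -/
def RSKList (l : List ℕ) : List (List ℕ) := l.foldl rowInsert []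

/-- RSK insertion tableau `P(w)` of a permutation. -/
def RSKP {n : ℕ} (w : Equiv.Perm (Fin n)) : List (List ℕ) := RSKList (oneLine w)

/-- RSK recording tableau `Q(w) = P(w⁻¹)`. -/
def RSKQ {n : ℕ} (w : Equiv.Perm (Fin n)) : List (List ℕ) := RSKP w⁻¹

/-- The set of entries in the first row of a tableau. -/
def Row1 (T : List (List ℕ)) : Finset ℕ := (T.getD 0 []).toFinset

/-- The set of entries in the second row of a tableau. -/
def Row2 (T : List (List ℕ)) : Finset ℕ := (T.getD 1 []).toFinset

/-- `BumpsAt l k z` : during the RSK insertion of the list `l`, the insertion of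
the `(k+1)`-st letter of `l` bumps the value `z` from the first row to the
second row (`z` is the smallest first-row entry larger than the inserted letter). -/
def BumpsAt (l : List ℕ) (k : ℕ) (z : ℕ) : Prop :=
  k < l.length ∧
    ((RSKList (l.take k)).getD 0 []).find? (fun y => decide (l.getD k 0 < y)) = some z

/-- `Bumps l b z` : during the RSK insertion of `l`, the value `b` bumps the
value `z` from the first row to the second row. -/
def Bumps (l : List ℕ) (b z : ℕ) : Prop :=
  ∃ k, l.getD k 0 = b ∧ BumpsAt l k z

/-- A finite set of naturals is crowded if some integer interval `[y, y+2x]`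
(with `x > 0`) contains more than `x+1` of its elements. -/
def CrowdedSet (L : Finset ℕ) : Prop :=
  ∃ x y : ℤ, 0 < x ∧
    x + 1 < ((L.filter fun a : ℕ => y ≤ (a : ℤ) ∧ (a : ℤ) ≤ y + 2 * x).card : ℤ)

/-- A fully commutative permutation is crowded if the second row of its RSK
insertion tableau is a crowded set. -/
def CrowdedPerm {n : ℕ} (w : Equiv.Perm (Fin n)) : Prop :=
  CrowdedSet (Row2 (RSKP w))

/-- Covering relation of the right weak order. -/
def RWCovers {n : ℕ} (u v : Equiv.Perm (Fin n)) : Prop :=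
  ∃ i, ∃ h : i + 1 < n, v = u * simpleTr i h ∧ invCount v = invCount u + 1

/-- The right weak order on `S_n`. -/
def RightWeakLE {n : ℕ} : Equiv.Perm (Fin n) → Equiv.Perm (Fin n) → Prop :=
  Relation.ReflTransGen RWCovers

/-- Covering relation of the left weak order. -/
def LWCovers {n : ℕ} (u v : Equiv.Perm (Fin n)) : Prop :=
  ∃ i, ∃ h : i + 1 < n, v = simpleTr i h * u ∧ invCount v = invCount u + 1

/-- The left weak order on `S_n`. -/
def LeftWeakLE {n : ℕ} : Equiv.Perm (Fin n) → Equiv.Perm (Fin n) → Prop :=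
  Relation.ReflTransGen LWCovers

/-- A minimal crowded permutation: a crowded fully commutative permutation all of
whose strict predecessors (among fully commutative permutations) in the right
weak order are uncrowded. -/
def MinimalCrowded {n : ℕ} (w : Equiv.Perm (Fin n)) : Prop :=
  FullyCommutative w ∧ CrowdedPerm w ∧
    ∀ v : Equiv.Perm (Fin n), FullyCommutative v → RightWeakLE v w → v ≠ w →
      ¬ CrowdedPerm v

/-- `l` is an increasing subsequence of the one-line notation of `w`. -/
def IncreasingSubseq {n : ℕ} (w : Equiv.Perm (Fin n)) (l : List ℕ) : Prop :=
  l.Sublist (oneLine w) ∧ l.Pairwise (· < ·)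

/-- The length of a longest increasing subsequence of `w`. -/
noncomputable def lisLen {n : ℕ} (w : Equiv.Perm (Fin n)) : ℕ :=
  sSup {k | ∃ l : List ℕ, IncreasingSubseq w l ∧ l.length = k}

/-- A consecutive occurrence of the pattern 415263 starting at (0-indexed) position `i`. -/
def Consec415263 {n : ℕ} (w : Equiv.Perm (Fin n)) (i : ℕ) : Prop :=
  i + 5 < n ∧
    entry w (i + 1) < entry w (i + 3) ∧ entry w (i + 3) < entry w (i + 5) ∧
    entry w (i + 5) < entry w i ∧ entry w i < entry w (i + 2) ∧
    entry w (i + 2) < entry w (i + 4)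

/-- A consecutive occurrence of the pattern 315264 starting at (0-indexed) position `i`. -/
def Consec315264 {n : ℕ} (w : Equiv.Perm (Fin n)) (i : ℕ) : Prop :=
  i + 5 < n ∧
    entry w (i + 1) < entry w (i + 3) ∧ entry w (i + 3) < entry w i ∧
    entry w i < entry w (i + 5) ∧ entry w (i + 5) < entry w (i + 2) ∧
    entry w (i + 2) < entry w (i + 4)

/-- An occurrence (not necessarily consecutive) of the pattern 415263 in `w`,
at positions `p 0 < p 1 < ⋯ < p 5`. -/
def Occ415263 {n : ℕ} (w : Equiv.Perm (Fin n)) (p : Fin 6 → Fin n) : Prop :=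
  StrictMono p ∧
    w (p 1) < w (p 3) ∧ w (p 3) < w (p 5) ∧ w (p 5) < w (p 0) ∧
    w (p 0) < w (p 2) ∧ w (p 2) < w (p 4)

/-!
At a descent `d` of a fully commutative `w`, 321-avoidance forces `w(d)` to exceed every
first-row entry inserted before it, so `w(d)` is appended to the first row. If `w(d+1)` also
bumped some earlier first-row entry, the Knuth relation `y z x ≡ y x z` would give
`P(w·s_d) = P(w)`; since `w·s_d` is fully commutative and lies strictly below `w` in the right
weak order, this contradicts minimality. Hence `w(d+1)` bumps exactly `w(d)` and becomes the
largest first-row entry. At an ascent `w(d+1)` exceeds the last inserted letter, which is always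
the maximum of the first row, so nothing is bumped. Thus bumps happen exactly at descents, and
each second-row entry, having been bumped at some step, is such a `w(d)`.
-/

section RowInsertion

variable {T : List (List ℕ)} {x z : ℕ}

lemma rowInsert_getD_zero_of_find?_eq_none (h : (T.getD 0 []).find? (x < ·) = none) :
    (rowInsert T x).getD 0 [] = T.getD 0 [] ++ [x] := by
  cases T with
  | nil => rfl
  | cons r rest =>
    rw [List.getD_cons_zero] at h
    simp only [rowInsert, h, List.getD_cons_zero]

lemma rowInsert_getD_zero_of_find?_eq_some {b : ℕ} (h : (T.getD 0 []).find? (x < ·) = some b) :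
    (rowInsert T x).getD 0 [] = (T.getD 0 []).map fun y => if y = b then x else y := by
  cases T with
  | nil => simp at h
  | cons r rest =>
    rw [List.getD_cons_zero] at h
    simp only [rowInsert, h, List.getD_cons_zero]

lemma mem_rowInsert_getD_zero (hz : z ∈ (rowInsert T x).getD 0 []) :
    z = x ∨ z ∈ T.getD 0 [] ∧ (T.getD 0 []).find? (x < ·) ≠ some z := by
  cases hf : (T.getD 0 []).find? (x < ·) with
  | none =>
    rw [rowInsert_getD_zero_of_find?_eq_none hf] at hz
    simp only [List.mem_append, List.mem_singleton] at hz
    tauto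
  | some b =>
    rw [rowInsert_getD_zero_of_find?_eq_some hf] at hz
    obtain ⟨a, ha, rfl⟩ := List.mem_map.1 hz
    by_cases hab : a = b
    · simp [hab]
    · simp only [hab, if_false]
      exact Or.inr ⟨ha, fun h => hab (Option.some.inj h).symm⟩

lemma mem_rowInsert_getD_one (hz : z ∈ (rowInsert T x).getD 1 []) :
    z ∈ T.getD 1 [] ∨ (T.getD 0 []).find? (x < ·) = some z := by
  cases T with
  | nil => simp [rowInsert] at hz
  | cons r rest =>
    simp only [List.getD_cons_zero, List.getD_cons_succ]
    cases hf : r.find? (x < ·) with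
    | none => simpa only [rowInsert, hf, List.getD_cons_succ] using Or.inl hz
    | some b =>
      simp only [rowInsert, hf, List.getD_cons_succ] at hz
      rcases mem_rowInsert_getD_zero hz with rfl | ⟨hz, -⟩
      · exact Or.inr rfl
      · exact Or.inl hz

-- The Knuth relation `y z x ≡ y x z` (`x < y < z`), with `x = e`, `z = c` and `y = b` in the row.
lemma rowInsert_rowInsert_comm {c e b : ℕ} (hec : e < c)
    (hc : (T.getD 0 []).find? (c < ·) = none) (he : (T.getD 0 []).find? (e < ·) = some b)
    (hbc : b ≠ c) :
    rowInsert (rowInsert T e) c = rowInsert (rowInsert T c) e := by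
  cases T with
  | nil => simp at he
  | cons r rest =>
    simp only [List.getD_cons_zero] at hc he
    have hc' : (r.map fun y => if y = b then e else y).find? (c < ·) = none := by
      simp only [List.find?_eq_none, List.mem_map] at hc ⊢
      rintro _ ⟨a, ha, rfl⟩
      split_ifs <;> simp_all [hec.le]
    simp [rowInsert, hc, he, hc', List.find?_append, hbc.symm]

end RowInsertion

section RSK

variable {l : List ℕ} {k z : ℕ}

lemma RSKList_append (A B : List ℕ) : RSKList (A ++ B) = B.foldl rowInsert (RSKList A) :=
  List.foldl_append ..

lemma RSKList_take_succ (hk : k < l.length) :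
    RSKList (l.take (k + 1)) = rowInsert (RSKList (l.take k)) (l.getD k 0) := by
  rw [List.take_add_one, List.getElem?_eq_getElem hk, RSKList_append, List.getD_eq_getElem _ _ hk]
  rfl

abbrev firstRowAfter (l : List ℕ) (k : ℕ) : List ℕ := (RSKList (l.take k)).getD 0 []

lemma firstRowAfter_succ (hk : k < l.length) :
    firstRowAfter l (k + 1) = (rowInsert (RSKList (l.take k)) (l.getD k 0)).getD 0 [] := by
  rw [firstRowAfter, RSKList_take_succ hk]

lemma mem_of_mem_foldl_rowInsert_getD_zero (T : List (List ℕ)) :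
    z ∈ (l.foldl rowInsert T).getD 0 [] → z ∈ T.getD 0 [] ∨ z ∈ l := by
  induction l generalizing T with
  | nil => exact Or.inl
  | cons x l ih =>
    intro hz
    rcases ih _ hz with hz | hz
    · rcases mem_rowInsert_getD_zero hz with rfl | ⟨hz, -⟩
      · simp
      · exact Or.inl hz
    · exact Or.inr (List.mem_cons_of_mem x hz)

lemma mem_of_mem_RSKList_getD_zero (hz : z ∈ (RSKList l).getD 0 []) : z ∈ l := by
  simpa using mem_of_mem_foldl_rowInsert_getD_zero [] hz

lemma not_bumpsAt_zero : ¬ BumpsAt l 0 z := by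
  simp [BumpsAt, RSKList]

lemma exists_bumpsAt_of_mem_RSKList_take_getD_one (hk : k ≤ l.length)
    (hz : z ∈ (RSKList (l.take k)).getD 1 []) : ∃ j, BumpsAt l j z := by
  induction k with
  | zero => simp [RSKList] at hz
  | succ k ih =>
    rw [RSKList_take_succ hk] at hz
    rcases mem_rowInsert_getD_one hz with hz | hz
    · exact ih (by omega) hz
    · exact ⟨k, hk, hz⟩

lemma exists_bumpsAt_of_mem_RSKList_getD_one (hz : z ∈ (RSKList l).getD 1 []) :
    ∃ k, BumpsAt l k z :=
  exists_bumpsAt_of_mem_RSKList_take_getD_one le_rfl (by rwa [List.take_length])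

end RSK

section Permutation

variable {n d : ℕ} (w : Equiv.Perm (Fin n))

lemma oneLine_length : (oneLine w).length = n := List.length_ofFn

lemma oneLine_getD {j : ℕ} (hj : j < n) : (oneLine w).getD j 0 = w ⟨j, hj⟩ := by
  simp [oneLine, hj]

lemma entry_eq_oneLine_getD {j : ℕ} (hj : j < n) : entry w j = (oneLine w).getD j 0 := by
  rw [entry, dif_pos hj, oneLine_getD w hj]

lemma entry_lt_entry_succ_of_le (hd : n ≤ d + 1) : entry w d < entry w (d + 1) := by
  simp only [entry, dif_neg (show ¬d + 1 < n by omega)]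
  split_ifs with h
  · exact (w ⟨d, h⟩).is_lt.trans_le hd
  · exact d.lt_succ_self

lemma eq_of_oneLine_getD_eq {i j : ℕ} (hi : i < n) (hj : j < n)
    (h : (oneLine w).getD i 0 = (oneLine w).getD j 0) : i = j := by
  rw [oneLine_getD w hi, oneLine_getD w hj, Fin.val_inj, w.apply_eq_iff_eq] at h
  exact Fin.val_eq_of_eq h

lemma oneLine_eq_take_append (hd : d + 1 < n) :
    oneLine w = (oneLine w).take d ++
      (oneLine w).getD d 0 :: (oneLine w).getD (d + 1) 0 :: (oneLine w).drop (d + 2) := by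
  have := oneLine_length w
  rw [List.getD_eq_getElem _ _ (by omega), List.getD_eq_getElem _ _ (by omega),
    ← List.drop_eq_getElem_cons, ← List.drop_eq_getElem_cons, List.take_append_drop]

lemma simpleTr_apply_val (hd : d + 1 < n) (x : Fin n) :
    (simpleTr d hd x : ℕ) =
      if (x : ℕ) = d then d + 1 else if (x : ℕ) = d + 1 then d else x := by
  rw [simpleTr, Equiv.swap_apply_def]
  split_ifs <;> simp_all [Fin.ext_iff]

lemma oneLine_mul_simpleTr (hd : d + 1 < n) :
    oneLine (w * simpleTr d hd) = (oneLine w).take d ++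
      (oneLine w).getD (d + 1) 0 :: (oneLine w).getD d 0 :: (oneLine w).drop (d + 2) := by
  rw [oneLine_getD w hd, oneLine_getD w (by omega)]
  apply List.ext_getElem
  · simp only [oneLine_length, List.length_append, List.length_take, List.length_cons,
      List.length_drop]
    omega
  · intro j h1 h2
    simp only [oneLine, List.getElem_ofFn, Equiv.Perm.mul_apply, List.getElem_append,
      List.getElem_cons, List.getElem_take, List.getElem_drop, List.length_take, List.length_ofFn]
    split_ifs <;> congr 2 <;> ext <;> simp only [simpleTr_apply_val] <;> split_ifs <;> omega

lemma simpleTr_lt_simpleTr (hd : d + 1 < n) {p q : Fin n} (hpq : p < q)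
    (hne : ¬(p = ⟨d, by omega⟩ ∧ q = ⟨d + 1, hd⟩)) :
    simpleTr d hd p < simpleTr d hd q := by
  simp only [Fin.ext_iff] at hne
  rw [Fin.lt_def] at hpq ⊢
  rw [simpleTr_apply_val, simpleTr_apply_val]
  split_ifs <;> omega

lemma FullyCommutative.mul_simpleTr {w : Equiv.Perm (Fin n)} (hfc : FullyCommutative w)
    (hd : d + 1 < n) (hdes : w ⟨d + 1, hd⟩ < w ⟨d, by omega⟩) :
    FullyCommutative (w * simpleTr d hd) := by
  rintro ⟨i, j, k, hij, hjk, hkj, hji⟩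
  have hne {p q : Fin n} (hqp : w (simpleTr d hd q) < w (simpleTr d hd p)) :
      ¬(p = ⟨d, by omega⟩ ∧ q = ⟨d + 1, hd⟩) := by
    rintro ⟨hp, hq⟩
    rw [hp, hq] at hqp
    simp only [simpleTr, Equiv.swap_apply_left, Equiv.swap_apply_right] at hqp
    exact hqp.asymm hdes
  exact hfc ⟨_, _, _, simpleTr_lt_simpleTr hd hij (hne hji),
    simpleTr_lt_simpleTr hd hjk (hne hkj), hkj, hji⟩

def inversions (w : Equiv.Perm (Fin n)) : Finset (Fin n × Fin n) :=
  Finset.univ.filter fun p => p.1 < p.2 ∧ w p.2 < w p.1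

lemma mem_inversions {p q : Fin n} : (p, q) ∈ inversions w ↔ p < q ∧ w q < w p := by
  simp [inversions]

lemma inversions_mul_simpleTr (hd : d + 1 < n) (hasc : w ⟨d, by omega⟩ < w ⟨d + 1, hd⟩) :
    inversions (w * simpleTr d hd) = insert (⟨d, by omega⟩, ⟨d + 1, hd⟩)
      ((inversions w).map ((simpleTr d hd).prodCongr (simpleTr d hd)).toEmbedding) := by
  set s := simpleTr d hd
  have hs : s.symm = s := Equiv.symm_swap _ _
  ext ⟨p, q⟩
  simp only [Finset.mem_insert, Finset.mem_map_equiv, Equiv.prodCongr_symm, hs,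
    Equiv.prodCongr_apply, Prod.map, Prod.mk.injEq, mem_inversions, Equiv.Perm.mul_apply]
  constructor
  · rintro ⟨hpq, hwqp⟩
    by_cases hab : p = ⟨d, by omega⟩ ∧ q = ⟨d + 1, hd⟩
    · exact Or.inl hab
    · exact Or.inr ⟨simpleTr_lt_simpleTr hd hpq hab, hwqp⟩
  · rintro (⟨rfl, rfl⟩ | ⟨hpq, hwqp⟩)
    · exact ⟨Fin.lt_def.2 d.lt_succ_self, by
        simpa only [s, simpleTr, Equiv.swap_apply_left, Equiv.swap_apply_right] using hasc⟩
    · refine ⟨?_, hwqp⟩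
      have hab : ¬(s p = ⟨d, by omega⟩ ∧ s q = ⟨d + 1, hd⟩) := by
        rintro ⟨hp, hq⟩
        rw [hp, hq] at hwqp
        exact hwqp.asymm hasc
      simpa only [s, simpleTr, Equiv.swap_apply_self] using simpleTr_lt_simpleTr hd hpq hab

lemma invCount_mul_simpleTr (hd : d + 1 < n) (hasc : w ⟨d, by omega⟩ < w ⟨d + 1, hd⟩) :
    invCount (w * simpleTr d hd) = invCount w + 1 := by
  have hnot : (⟨d, by omega⟩, ⟨d + 1, hd⟩) ∉
      (inversions w).map ((simpleTr d hd).prodCongr (simpleTr d hd)).toEmbedding := by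
    simp only [Finset.mem_map_equiv, Equiv.prodCongr_symm, simpleTr, Equiv.symm_swap,
      Equiv.prodCongr_apply, Prod.map, Equiv.swap_apply_left, Equiv.swap_apply_right,
      mem_inversions, Fin.mk_lt_mk]
    omega
  change (inversions _).card = (inversions w).card + 1
  rw [inversions_mul_simpleTr w hd hasc, Finset.card_insert_of_notMem hnot, Finset.card_map]

lemma mul_simpleTr_ne_self (hd : d + 1 < n) : w * simpleTr d hd ≠ w := by
  simp [simpleTr, Equiv.swap_eq_one_iff, Fin.ext_iff]

lemma rightWeakLE_mul_simpleTr (hd : d + 1 < n) (hdes : w ⟨d + 1, hd⟩ < w ⟨d, by omega⟩) :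
    RightWeakLE (w * simpleTr d hd) w := by
  have hww : w * simpleTr d hd * simpleTr d hd = w := by
    rw [mul_assoc, simpleTr, Equiv.swap_mul_self, mul_one]
  refine .single ⟨d, hd, hww.symm, ?_⟩
  have := invCount_mul_simpleTr (w * simpleTr d hd) hd (by
    simpa only [Equiv.Perm.mul_apply, simpleTr, Equiv.swap_apply_left, Equiv.swap_apply_right])
  rwa [hww] at this

end Permutation

section MinimalCrowded

variable {n d : ℕ} {w : Equiv.Perm (Fin n)}

lemma exists_of_mem_firstRowAfter_oneLine {k u : ℕ} (hu : u ∈ firstRowAfter (oneLine w) k) :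
    ∃ j : Fin n, (j : ℕ) < k ∧ u = w j := by
  obtain ⟨j, hj, rfl⟩ := List.mem_take_iff_getElem.1 (mem_of_mem_RSKList_getD_zero hu)
  rw [oneLine_length] at hj
  exact ⟨⟨j, by omega⟩, show j < k by omega, by simp [oneLine]⟩

-- An earlier first-row entry above `w(d)` would form a `321` pattern with `w(d)` and `w(d+1)`.
lemma FullyCommutative.find?_firstRowAfter_eq_none (hfc : FullyCommutative w) (hd : d + 1 < n)
    (hdes : (oneLine w).getD (d + 1) 0 < (oneLine w).getD d 0) :
    (firstRowAfter (oneLine w) d).find? ((oneLine w).getD d 0 < ·) = none := by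
  rw [List.find?_eq_none]
  intro u hu hlt
  obtain ⟨j, hj, rfl⟩ := exists_of_mem_firstRowAfter_oneLine hu
  rw [oneLine_getD w hd, oneLine_getD w (by omega)] at hdes
  rw [oneLine_getD w (by omega), decide_eq_true_eq] at hlt
  exact hfc ⟨j, ⟨d, by omega⟩, ⟨d + 1, hd⟩, Fin.lt_def.2 hj, Fin.lt_def.2 d.lt_succ_self,
    Fin.lt_def.2 hdes, Fin.lt_def.2 hlt⟩

lemma FullyCommutative.RSKP_mul_simpleTr (hfc : FullyCommutative w) (hd : d + 1 < n)
    (hdes : (oneLine w).getD (d + 1) 0 < (oneLine w).getD d 0) {b : ℕ}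
    (hb : (firstRowAfter (oneLine w) d).find? ((oneLine w).getD (d + 1) 0 < ·) = some b) :
    RSKP (w * simpleTr d hd) = RSKP w := by
  obtain ⟨j, hj, rfl⟩ := exists_of_mem_firstRowAfter_oneLine (List.mem_of_find?_eq_some hb)
  have hbc : (w j : ℕ) ≠ (oneLine w).getD d 0 := by
    rw [oneLine_getD w (by omega), Ne, Fin.val_inj, w.apply_eq_iff_eq, Fin.ext_iff]
    exact hj.ne
  have hswap := rowInsert_rowInsert_comm hdes (hfc.find?_firstRowAfter_eq_none hd hdes) hb hbc
  rw [RSKP, RSKP, oneLine_mul_simpleTr]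
  conv_rhs => rw [oneLine_eq_take_append w hd]
  simp only [RSKList_append, List.foldl_cons, hswap]

lemma MinimalCrowded.find?_firstRowAfter_eq_none (hmin : MinimalCrowded w) (hd : d + 1 < n)
    (hdes : (oneLine w).getD (d + 1) 0 < (oneLine w).getD d 0) :
    (firstRowAfter (oneLine w) d).find? ((oneLine w).getD (d + 1) 0 < ·) = none := by
  obtain ⟨hfc, hcrowded, hbelow⟩ := hmin
  refine Option.eq_none_iff_forall_ne_some.2 fun b hb => ?_
  have hdes' : w ⟨d + 1, hd⟩ < w ⟨d, by omega⟩ := by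
    rwa [oneLine_getD w hd, oneLine_getD w (by omega)] at hdes
  refine hbelow _ (hfc.mul_simpleTr hd hdes') (rightWeakLE_mul_simpleTr w hd hdes')
    (mul_simpleTr_ne_self w hd) ?_
  rwa [CrowdedPerm, hfc.RSKP_mul_simpleTr hd hdes hb]

lemma MinimalCrowded.find?_firstRowAfter_succ (hmin : MinimalCrowded w) (hd : d + 1 < n)
    (hdes : (oneLine w).getD (d + 1) 0 < (oneLine w).getD d 0) :
    (firstRowAfter (oneLine w) (d + 1)).find? ((oneLine w).getD (d + 1) 0 < ·) =
      some ((oneLine w).getD d 0) := by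
  rw [firstRowAfter_succ (by rw [oneLine_length]; omega),
    rowInsert_getD_zero_of_find?_eq_none (hmin.1.find?_firstRowAfter_eq_none hd hdes),
    List.find?_append, hmin.find?_firstRowAfter_eq_none hd hdes]
  simpa using hdes

lemma MinimalCrowded.le_of_mem_firstRowAfter (hmin : MinimalCrowded w) {k y : ℕ} (hk : k < n)
    (hy : y ∈ firstRowAfter (oneLine w) (k + 1)) : y ≤ (oneLine w).getD k 0 := by
  have hlen := oneLine_length w
  induction k generalizing y with
  | zero =>
    simp only [firstRowAfter_succ (show 0 < (oneLine w).length by omega), List.take_zero] at hy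
    have hy0 : y = (oneLine w).getD 0 0 := by simpa [RSKList, rowInsert] using hy
    exact hy0.le
  | succ k ih =>
    rw [firstRowAfter_succ (by omega)] at hy
    rcases mem_rowInsert_getD_zero hy with rfl | ⟨hy, hne⟩
    · rfl
    rcases lt_trichotomy ((oneLine w).getD k 0) ((oneLine w).getD (k + 1) 0) with hlt | heq | hgt
    · exact (ih (by omega) hy).trans hlt.le
    · exact absurd (eq_of_oneLine_getD_eq w (by omega) hk heq) k.succ_ne_self.symm
    · rw [hmin.find?_firstRowAfter_succ hk hgt] at hne
      rw [RSKList_take_succ (by omega)] at hy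
      rcases mem_rowInsert_getD_zero hy with rfl | ⟨hy, -⟩
      · exact absurd rfl hne
      · simpa using List.find?_eq_none.1 (hmin.find?_firstRowAfter_eq_none hk hgt) y hy

lemma MinimalCrowded.bumpsAt_succ_iff (hmin : MinimalCrowded w) {z : ℕ} :
    BumpsAt (oneLine w) (d + 1) z ↔
      d + 1 < n ∧ (oneLine w).getD (d + 1) 0 < (oneLine w).getD d 0 ∧
        z = (oneLine w).getD d 0 := by
  rw [BumpsAt, oneLine_length]
  constructor
  · rintro ⟨hd, hb⟩
    rcases lt_trichotomy ((oneLine w).getD d 0) ((oneLine w).getD (d + 1) 0) with hlt | heq | hgt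
    · have hzd := hmin.le_of_mem_firstRowAfter (by omega) (List.mem_of_find?_eq_some hb)
      have hdz := List.find?_some hb
      rw [decide_eq_true_eq] at hdz
      omega
    · exact absurd (eq_of_oneLine_getD_eq w (by omega) hd heq) d.succ_ne_self.symm
    · exact ⟨hd, hgt, Option.some.inj (hb.symm.trans (hmin.find?_firstRowAfter_succ hd hgt))⟩
  · rintro ⟨hd, hdes, rfl⟩
    exact ⟨hd, hmin.find?_firstRowAfter_succ hd hdes⟩

end MinimalCrowded

/-- **Corollary.** Let `w` be a minimal crowded permutation. (a) `d` is a descent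
of `w` iff `w(d+1)` bumps `w(d)` to the second row during RSK insertion;
(b) every entry of `Row₂(P(w))` is `w(d)` for some descent `d`, bumped by `w(d+1)`. -/
theorem minimal_crowded_bumps {n : ℕ} (w : Equiv.Perm (Fin n))
    (hmin : MinimalCrowded w) :
    (∀ d : ℕ, entry w (d + 1) < entry w d ↔
      BumpsAt (oneLine w) (d + 1) (entry w d)) ∧
    (∀ z ∈ Row2 (RSKP w), ∃ d : ℕ,
      entry w (d + 1) < entry w d ∧ entry w d = z ∧
        BumpsAt (oneLine w) (d + 1) z) := by
  refine ⟨fun d => ?_, fun z hz => ?_⟩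
  · by_cases hd : d + 1 < n
    · rw [entry_eq_oneLine_getD w hd, entry_eq_oneLine_getD w (by omega), hmin.bumpsAt_succ_iff]
      simp [hd]
    · exact iff_of_false (entry_lt_entry_succ_of_le w (by omega)).asymm
        fun h => hd (hmin.bumpsAt_succ_iff.1 h).1
  · obtain ⟨_ | d, hbump⟩ := exists_bumpsAt_of_mem_RSKList_getD_one (List.mem_toFinset.1 hz)
    · exact absurd hbump not_bumpsAt_zero
    · obtain ⟨hd, hdes, rfl⟩ := hmin.bumpsAt_succ_iff.1 hbump
      refine ⟨d, ?_, entry_eq_oneLine_getD w (by omega), hbump⟩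
      rwa [entry_eq_oneLine_getD w hd, entry_eq_oneLine_getD w (by omega)]
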